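/- The finite linear span of mapping space monomials is closed under pointwise multiplication: the set of functions F : Lip(□^d, ℝ^n) → ℝ of the form F(x) = λ_0 + Σ_{i=1}^r λ_i Φ_{m_i}^{P_i,π_i}(x), where r ∈ ℕ, λ_0,…,λ_r ∈ ℝ, and each (P_i,π_i) is a level-m_i index, is a subalgebra of the algebra of real-valued functions on Lip(□^d, ℝ^n); in particular, for any two such functions F and G there exist λ'_0,…,λ'_{r'} and level indices (P'_i,π'_i) with F(x)·G(x) = λ'_0 + Σ_{i=1}^{r'} λ'_i Φ_{m'_i}^{P'_i,π'_i}(x) for every x ∈ Lip(□^d, ℝ^n). -/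

import Mathlib

/-!
Since the span contains the constants, it suffices to show that a product of two monomials
`Φ^{P,π}(x) Φ^{Q,ρ}(x)` is a sum of monomials. By Fubini it is the integral of
`∏ᵢ J[x_{(P,Q)ᵢ}](tᵢ)` over the set of `t ∈ ([0,1]^d)^{m+m'}` whose first `m` rows lie in
`D_π` and whose last `m'` rows lie in `D_ρ`. Off the null set where some column of `t` has a
repeated entry, the cube is partitioned into the cells `D_σ`, `σ ∈ Σ_{m+m'}^d`, and membership
in that set only depends on the order pattern of the columns, i.e. on the cell. So the integral
is the sum of the monomials `Φ^{(P,Q),σ}(x)` over the cells contained in it. Lipschitz continuity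
bounds the Jacobian minors, which makes all integrals involved finite.
-/

open MeasureTheory

open scoped Classical

noncomputable section

/-- The unit cube `[0,1]^d` as a subset of `Fin d → ℝ`. -/
def unitCube (d : ℕ) : Set (Fin d → ℝ) := Set.Icc 0 1

/-- Lipschitz condition with constant `L`, with respect to Euclidean norms. -/
def EuclidLip {d n : ℕ} (L : ℝ) (x : (Fin d → ℝ) → Fin n → ℝ) : Prop :=
  ∀ s t : Fin d → ℝ,
    Real.sqrt (∑ k, (x s k - x t k) ^ 2) ≤ L * Real.sqrt (∑ j, (s j - t j) ^ 2)

/-- Lipschitz map. -/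
def IsLipMap {d n : ℕ} (x : (Fin d → ℝ) → Fin n → ℝ) : Prop :=
  ∃ L : ℝ, EuclidLip L x

/-- The Jacobian minor `J[x_P](s)`: the determinant of the `d × d` matrix
with `(i,j)` entry `∂ x_{P i} / ∂ s_j (s)`. -/
def jacobianMinor {d n : ℕ} (x : (Fin d → ℝ) → Fin n → ℝ) (P : Fin d → Fin n)
    (s : Fin d → ℝ) : ℝ :=
  (Matrix.of fun i j : Fin d => fderiv ℝ (fun t => x t (P i)) s (Pi.single j 1)).det

/-- The permuted `m`-simplex `Δ^m_π(a,b)`. -/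
def permSimplex {m : ℕ} (π : Equiv.Perm (Fin m)) (a b : ℝ) : Set (Fin m → ℝ) :=
  {u | (∀ i, u i ∈ Set.Icc a b) ∧ StrictMono fun i => u (π i)}

/-- The integration domain `D^{m,d}_π(a,b) = Δ^m_{π 1}(a₁,b₁) × ⋯ × Δ^m_{π d}(a_d,b_d)`. -/
def intDomain {m d : ℕ} (π : Fin d → Equiv.Perm (Fin m)) (a b : Fin d → ℝ) :
    Set (Fin m → Fin d → ℝ) :=
  {t | ∀ j, (fun i => t i j) ∈ permSimplex (π j) (a j) (b j)}

/-- The restricted mapping space monomial `Φ_m^{P,π}(x)_{a,b}`. -/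
def msMonomialOn {d n m : ℕ} (x : (Fin d → ℝ) → Fin n → ℝ)
    (P : Fin m → Fin d → Fin n) (π : Fin d → Equiv.Perm (Fin m))
    (a b : Fin d → ℝ) : ℝ :=
  ∫ t in intDomain π a b, ∏ i, jacobianMinor x (P i) (t i)

/-- The mapping space monomial `Φ_m^{P,π}(x)`. -/
def msMonomial {d n m : ℕ} (x : (Fin d → ℝ) → Fin n → ℝ)
    (P : Fin m → Fin d → Fin n) (π : Fin d → Equiv.Perm (Fin m)) : ℝ :=
  msMonomialOn x P π (fun _ => 0) (fun _ => 1)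

section JacobianBound

variable {d n : ℕ}

lemma EuclidLip.lipschitzWith_apply {L : ℝ} {x : (Fin d → ℝ) → Fin n → ℝ} (hx : EuclidLip L x)
    (k : Fin n) : LipschitzWith (|L| * √d).toNNReal fun s => x s k := by
  refine LipschitzWith.of_dist_le_mul fun s t => ?_
  have hdom : dist (WithLp.toLp 2 s) (WithLp.toLp 2 t) ≤ √d * dist s t := by
    simpa [Real.sqrt_eq_rpow] using (PiLp.lipschitzWith_toLp 2 fun _ : Fin d => ℝ).dist_le_mul s t
  rw [Real.coe_toNNReal _ (by positivity)]
  calc dist (x s k) (x t k) ≤ dist (WithLp.toLp 2 (x s)) (WithLp.toLp 2 (x t)) :=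
        PiLp.dist_apply_le (WithLp.toLp 2 (x s)) (WithLp.toLp 2 (x t)) k
    _ ≤ L * dist (WithLp.toLp 2 s) (WithLp.toLp 2 t) := by
        simpa [EuclideanSpace.dist_eq, Real.dist_eq, sq_abs] using hx s t
    _ ≤ |L| * (√d * dist s t) := by gcongr; exact le_abs_self L
    _ = |L| * √d * dist s t := by ring

lemma measurable_jacobianMinor (x : (Fin d → ℝ) → Fin n → ℝ) (P : Fin d → Fin n) :
    Measurable (jacobianMinor x P) := by
  have hdet : Continuous fun A : Fin d → Fin d → ℝ => (Matrix.of A).det :=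
    continuous_id.matrix_det
  exact hdet.measurable.comp <| measurable_pi_lambda _ fun i =>
    measurable_pi_lambda _ fun j => measurable_fderiv_apply_const ℝ _ _

lemma IsLipMap.exists_abs_jacobianMinor_le {x : (Fin d → ℝ) → Fin n → ℝ} (hx : IsLipMap x) :
    ∃ C : ℝ, ∀ P s, |jacobianMinor x P s| ≤ C := by
  obtain ⟨L, hL⟩ := hx
  have hentry : ∀ k (j : Fin d) s,
      |fderiv ℝ (fun t => x t k) s (Pi.single j 1)| ≤ (|L| * √d).toNNReal := fun k j s =>
    calc |fderiv ℝ (fun t => x t k) s (Pi.single j 1)|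
        = ‖fderiv ℝ (fun t => x t k) s (Pi.single j 1)‖ := (Real.norm_eq_abs _).symm
      _ ≤ ‖fderiv ℝ (fun t => x t k) s‖ * ‖(Pi.single j 1 : Fin d → ℝ)‖ :=
        (fderiv ℝ _ s).le_opNorm _
      _ ≤ (|L| * √d).toNNReal * 1 := by
        gcongr
        · exact norm_fderiv_le_of_lipschitz ℝ (hL.lipschitzWith_apply k)
        · simp [Pi.norm_single]
      _ = _ := mul_one _
  exact ⟨_, fun P s => Matrix.det_le (abv := AbsoluteValue.abs) fun i j => hentry _ _ _⟩

lemma IsLipMap.integrableOn_prod_jacobianMinor {x : (Fin d → ℝ) → Fin n → ℝ} (hx : IsLipMap x)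
    {m : ℕ} (P : Fin m → Fin d → Fin n) {s : Set (Fin m → Fin d → ℝ)} (hs : volume s ≠ ⊤) :
    IntegrableOn (fun t => ∏ i, jacobianMinor x (P i) (t i)) s := by
  obtain ⟨C, hC⟩ := hx.exists_abs_jacobianMinor_le
  refine Measure.integrableOn_of_bounded (M := C ^ m) hs ?_ (.of_forall fun t => ?_)
  · exact (Finset.measurable_prod _ fun i _ =>
      (measurable_jacobianMinor x (P i)).comp (measurable_pi_apply i)).aestronglyMeasurable
  · simpa [Finset.abs_prod] using
      Finset.prod_le_prod (s := Finset.univ) (fun i _ => abs_nonneg _) fun i _ => hC (P i) (t i)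

end JacobianBound

section Cells

variable {d M : ℕ} {a b : Fin d → ℝ}

lemma measurableSet_permSimplex (π : Equiv.Perm (Fin M)) (a b : ℝ) :
    MeasurableSet (permSimplex π a b) := by
  simp only [permSimplex, StrictMono, Set.ofPred_and, Set.ofPred_forall]
  exact .inter (.iInter fun i => measurableSet_Icc.preimage (measurable_pi_apply i))
    (.iInter fun p => .iInter fun q => .iInter fun _ =>
      measurableSet_lt (measurable_pi_apply _) (measurable_pi_apply _))

lemma measurableSet_intDomain (σ : Fin d → Equiv.Perm (Fin M)) (a b : Fin d → ℝ) :
    MeasurableSet (intDomain σ a b) := by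
  simp only [intDomain, Set.ofPred_forall]
  exact .iInter fun j => (measurableSet_permSimplex _ _ _).preimage <|
    measurable_pi_lambda _ fun i => (measurable_pi_apply j).comp (measurable_pi_apply i)

lemma intDomain_subset_Icc (σ : Fin d → Equiv.Perm (Fin M)) :
    intDomain σ a b ⊆ Set.Icc (fun _ => a) (fun _ => b) :=
  fun _ ht => ⟨fun i j => ((ht j).1 i).1, fun i j => ((ht j).1 i).2⟩

lemma apply_lt_apply_iff_of_mem_intDomain {σ : Fin d → Equiv.Perm (Fin M)}
    {t : Fin M → Fin d → ℝ} (ht : t ∈ intDomain σ a b) (i₁ i₂ : Fin M) (j : Fin d) :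
    t i₁ j < t i₂ j ↔ (σ j).symm i₁ < (σ j).symm i₂ := by
  simpa using (ht j).2.lt_iff_lt (a := (σ j).symm i₁) (b := (σ j).symm i₂)

lemma injective_apply_of_mem_intDomain {σ : Fin d → Equiv.Perm (Fin M)}
    {t : Fin M → Fin d → ℝ} (ht : t ∈ intDomain σ a b) (j : Fin d) :
    Function.Injective fun i => t i j := by
  simpa [Function.comp_def] using (ht j).2.injective.comp (σ j).symm.injective

lemma disjoint_intDomain {σ σ' : Fin d → Equiv.Perm (Fin M)} (h : σ ≠ σ') :
    Disjoint (intDomain σ a b) (intDomain σ' a b) := by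
  refine Set.disjoint_left.2 fun t ht ht' => h <| funext fun j => ?_
  have hsort := Tuple.unique_monotone (f := fun i => t i j) (ht j).2.monotone (ht' j).2.monotone
  exact Equiv.ext fun i => injective_apply_of_mem_intDomain ht j (congrFun hsort i)

lemma exists_mem_intDomain {t : Fin M → Fin d → ℝ} (hbox : t ∈ Set.Icc (fun _ => a) (fun _ => b))
    (hinj : ∀ j, Function.Injective fun i => t i j) :
    ∃ σ : Fin d → Equiv.Perm (Fin M), t ∈ intDomain σ a b :=
  ⟨fun j => Tuple.sort fun i => t i j, fun j => ⟨fun i => ⟨hbox.1 i j, hbox.2 i j⟩,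
    (Tuple.monotone_sort _).strictMono_of_injective ((hinj j).comp (Equiv.injective _))⟩⟩

lemma volume_setOf_apply_eq_apply {ι κ : Type*} [Fintype ι] [Fintype κ] {i i' : ι} (h : i ≠ i')
    (j : κ) : volume {t : ι → κ → ℝ | t i j = t i' j} = 0 := by
  let φ : (ι → κ → ℝ) →ₗ[ℝ] ℝ :=
    LinearMap.proj (R := ℝ) (φ := fun _ : κ => ℝ) j ∘ₗ
      (LinearMap.proj (R := ℝ) (φ := fun _ : ι => κ → ℝ) i - LinearMap.proj i')
  have hφ : {t : ι → κ → ℝ | t i j = t i' j} = LinearMap.ker φ := by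
    ext t; simp [φ, sub_eq_zero]
  rw [hφ]
  refine Measure.addHaar_submodule _ _ fun htop => one_ne_zero (α := ℝ) ?_
  have : Pi.single i (Pi.single j 1) ∈ LinearMap.ker φ := htop ▸ Submodule.mem_top
  simp [φ, h.symm] at this

lemma volume_setOf_not_injective {ι κ : Type*} [Fintype ι] [Fintype κ] :
    volume {t : ι → κ → ℝ | ∃ j, ¬Function.Injective fun i => t i j} = 0 := by
  refine measure_mono_null (t := ⋃ j, ⋃ i, ⋃ i', ⋃ (_ : i ≠ i'), {t | t i j = t i' j})
    (fun t => by simp [Function.Injective]; tauto) ?_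
  simp only [measure_iUnion_null_iff]
  exact fun j i i' h => volume_setOf_apply_eq_apply h j

/-- Off the null set of points with a repeated entry in some column, the cells partition the box,
and `hsat` says that `S` is a union of cells. -/
lemma setIntegral_eq_sum_intDomain {S : Set (Fin M → Fin d → ℝ)} {F : (Fin M → Fin d → ℝ) → ℝ}
    (hS : S ⊆ Set.Icc (fun _ => a) (fun _ => b))
    (hsat : ∀ σ t t', t ∈ intDomain σ a b → t' ∈ intDomain σ a b → t ∈ S → t' ∈ S)
    (hF : IntegrableOn F (Set.Icc (fun _ => a) (fun _ => b))) :
    ∫ t in S, F t = ∑ σ with intDomain σ a b ⊆ S, ∫ t in intDomain σ a b, F t := by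
  set T := Finset.univ.filter fun σ : Fin d → Equiv.Perm (Fin M) => intDomain σ a b ⊆ S
  have hUS : (⋃ σ ∈ T, intDomain σ a b) ⊆ S := by
    simp [T]
  have hSU : S \ ⋃ σ ∈ T, intDomain σ a b ⊆
      {t | ∃ j, ¬Function.Injective fun i => t i j} := by
    rintro t ⟨htS, htU⟩
    simp only [Set.mem_ofPred_eq]
    by_contra! hinj
    obtain ⟨σ, hσ⟩ := exists_mem_intDomain (hS htS) hinj
    exact htU <| Set.mem_biUnion
      (Finset.mem_filter.2 ⟨Finset.mem_univ σ, fun t' ht' => hsat σ t t' hσ ht' htS⟩) hσ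
  have hae : S =ᵐ[volume] ⋃ σ ∈ T, intDomain σ a b :=
    ae_eq_set.2 ⟨measure_mono_null hSU volume_setOf_not_injective,
      by rw [Set.sdiff_eq_empty.2 hUS, measure_empty]⟩
  rw [setIntegral_congr_set hae]
  exact integral_biUnion_finset T (fun σ _ => measurableSet_intDomain σ a b)
    (fun σ _ σ' _ h => disjoint_intDomain h) fun σ _ => hF.mono_set (intDomain_subset_Icc σ)

end Cells

section Shuffle

variable {d m m' : ℕ}

def appendMeasurableEquiv (m m' : ℕ) (β : Type*) [MeasurableSpace β] :
    (Fin m → β) × (Fin m' → β) ≃ᵐ (Fin (m + m') → β) :=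
  (MeasurableEquiv.sumPiEquivProdPi fun _ : Fin m ⊕ Fin m' => β).symm.trans
    (MeasurableEquiv.piCongrLeft (fun _ => β) finSumFinEquiv)

lemma appendMeasurableEquiv_apply {β : Type*} [MeasurableSpace β]
    (p : (Fin m → β) × (Fin m' → β)) : appendMeasurableEquiv m m' β p = Fin.append p.1 p.2 := by
  funext i
  refine Fin.addCases (fun i => ?_) (fun i => ?_) i
  · simpa [appendMeasurableEquiv, MeasurableEquiv.piCongrLeft,
      MeasurableEquiv.sumPiEquivProdPi] using
      Equiv.piCongrLeft_sumInl (fun _ => β) finSumFinEquiv p.1 p.2 i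
  · simpa [appendMeasurableEquiv, MeasurableEquiv.piCongrLeft,
      MeasurableEquiv.sumPiEquivProdPi] using
      Equiv.piCongrLeft_sumInr (fun _ => β) finSumFinEquiv p.1 p.2 i

lemma measurePreserving_appendMeasurableEquiv (β : Type*) [MeasureSpace β]
    [SigmaFinite (volume : Measure β)] :
    MeasurePreserving (appendMeasurableEquiv m m' β) :=
  (volume_measurePreserving_piCongrLeft (fun _ : Fin (m + m') => β) finSumFinEquiv).comp
    (volume_measurePreserving_sumPiEquivProdPi_symm fun _ : Fin m ⊕ Fin m' => β)

/-- Up to a null set, the union of the cells `D^{m+m',d}_σ(a,b)` over the shuffles `σ` of `π`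
and `ρ`. -/
def shuffleSet (π : Fin d → Equiv.Perm (Fin m)) (ρ : Fin d → Equiv.Perm (Fin m'))
    (a b : Fin d → ℝ) : Set (Fin (m + m') → Fin d → ℝ) :=
  {t | (fun i => t (Fin.castAdd m' i)) ∈ intDomain π a b ∧
    (fun i => t (Fin.natAdd m i)) ∈ intDomain ρ a b}

variable {π : Fin d → Equiv.Perm (Fin m)} {ρ : Fin d → Equiv.Perm (Fin m')} {a b : Fin d → ℝ}

lemma preimage_appendMeasurableEquiv_shuffleSet :
    appendMeasurableEquiv m m' (Fin d → ℝ) ⁻¹' shuffleSet π ρ a b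
      = intDomain π a b ×ˢ intDomain ρ a b := by
  ext p
  simp [shuffleSet, appendMeasurableEquiv_apply]

lemma shuffleSet_subset_Icc :
    shuffleSet π ρ a b ⊆ Set.Icc (fun _ => a) (fun _ => b) := by
  intro t ht
  constructor <;> intro i <;> refine Fin.addCases (fun i => ?_) (fun i => ?_) i
  exacts [(intDomain_subset_Icc π ht.1).1 i, (intDomain_subset_Icc ρ ht.2).1 i,
    (intDomain_subset_Icc π ht.1).2 i, (intDomain_subset_Icc ρ ht.2).2 i]

lemma mem_shuffleSet_of_mem_intDomain {σ : Fin d → Equiv.Perm (Fin (m + m'))}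
    {t t' : Fin (m + m') → Fin d → ℝ} (ht : t ∈ intDomain σ a b) (ht' : t' ∈ intDomain σ a b)
    (hS : t ∈ shuffleSet π ρ a b) : t' ∈ shuffleSet π ρ a b := by
  have horder : ∀ i₁ i₂ j, t i₁ j < t i₂ j → t' i₁ j < t' i₂ j := fun i₁ i₂ j h => by
    rwa [apply_lt_apply_iff_of_mem_intDomain ht',
      ← apply_lt_apply_iff_of_mem_intDomain ht]
  exact ⟨fun j => ⟨fun i => (ht' j).1 _, fun _ _ h => horder _ _ j ((hS.1 j).2 h)⟩,
    fun j => ⟨fun i => (ht' j).1 _, fun _ _ h => horder _ _ j ((hS.2 j).2 h)⟩⟩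

lemma setIntegral_mul_setIntegral_eq_setIntegral_shuffleSet
    (f : Fin (m + m') → (Fin d → ℝ) → ℝ) :
    (∫ u in intDomain π a b, ∏ i, f (Fin.castAdd m' i) (u i)) *
      (∫ v in intDomain ρ a b, ∏ i, f (Fin.natAdd m i) (v i))
      = ∫ t in shuffleSet π ρ a b, ∏ i, f i (t i) := by
  rw [← (measurePreserving_appendMeasurableEquiv _).setIntegral_preimage_emb
      (MeasurableEquiv.measurableEmbedding _), preimage_appendMeasurableEquiv_shuffleSet,
    Measure.volume_eq_prod, ← Measure.prod_restrict, ← integral_prod_mul]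
  simp [appendMeasurableEquiv_apply, Fin.prod_univ_add]

end Shuffle

lemma IsLipMap.msMonomialOn_mul {d n m m' : ℕ} {x : (Fin d → ℝ) → Fin n → ℝ} (hx : IsLipMap x)
    (P : Fin m → Fin d → Fin n) (π : Fin d → Equiv.Perm (Fin m))
    (Q : Fin m' → Fin d → Fin n) (ρ : Fin d → Equiv.Perm (Fin m')) (a b : Fin d → ℝ) :
    msMonomialOn x P π a b * msMonomialOn x Q ρ a b =
      ∑ σ with intDomain σ a b ⊆ shuffleSet π ρ a b, msMonomialOn x (Fin.append P Q) σ a b := by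
  have h := setIntegral_mul_setIntegral_eq_setIntegral_shuffleSet (π := π) (ρ := ρ) (a := a)
    (b := b) fun i => jacobianMinor x (Fin.append P Q i)
  simp only [Fin.append_left, Fin.append_right] at h
  rw [msMonomialOn, msMonomialOn, h, setIntegral_eq_sum_intDomain shuffleSet_subset_Icc
    (fun _ _ _ => mem_shuffleSet_of_mem_intDomain)
    (hx.integrableOn_prod_jacobianMinor _ measure_Icc_lt_top.ne)]
  rfl

/-- A level-`m` index `(P, π) ∈ O_{d,n}^m × Σ_m^d` with `m ≥ 1`. -/
structure LevelIndex (d n : ℕ) where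
  m : ℕ
  P : Fin m → Fin d → Fin n
  π : Fin d → Equiv.Perm (Fin m)
  one_le_m : 1 ≤ m
  strictMono_P : ∀ k, StrictMono (P k)

abbrev LipMap (d n : ℕ) : Type := {x : (Fin d → ℝ) → Fin n → ℝ // IsLipMap x}

namespace LevelIndex

variable {d n : ℕ}

def monomial (I : LevelIndex d n) (x : LipMap d n) : ℝ :=
  msMonomial x.1 I.P I.π

def append (I J : LevelIndex d n) (σ : Fin d → Equiv.Perm (Fin (I.m + J.m))) :
    LevelIndex d n where
  m := I.m + J.m
  P := Fin.append I.P J.P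
  π := σ
  one_le_m := I.one_le_m.trans (Nat.le_add_right _ _)
  strictMono_P := Fin.addCases (by simpa using I.strictMono_P) (by simpa using J.strictMono_P)

lemma monomial_mul (I J : LevelIndex d n) :
    I.monomial * J.monomial =
      ∑ σ with intDomain σ (fun _ => 0) (fun _ => 1) ⊆
          shuffleSet I.π J.π (fun _ => 0) (fun _ => 1), (I.append J σ).monomial := by
  funext x
  simp only [Pi.mul_apply, Finset.sum_apply]
  exact x.2.msMonomialOn_mul I.P I.π J.P J.π _ _

end LevelIndex

open Submodule in
lemma mul_mem_span_monomials {d n : ℕ} {F G : LipMap d n → ℝ}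
    (hF : F ∈ span ℝ (insert 1 (Set.range LevelIndex.monomial)))
    (hG : G ∈ span ℝ (insert 1 (Set.range LevelIndex.monomial))) :
    F * G ∈ span ℝ (insert 1 (Set.range LevelIndex.monomial)) := by
  have hmul := mul_mem_mul hF hG
  rw [span_mul_span] at hmul
  refine span_le.2 ?_ hmul
  rintro _ ⟨F, hF, G, hG, rfl⟩
  rcases hF with rfl | ⟨I, rfl⟩
  · simpa using subset_span hG
  rcases hG with rfl | ⟨J, rfl⟩
  · simpa using subset_span (Set.mem_insert_of_mem _ (Set.mem_range_self I))
  simp only [SetLike.mem_coe, LevelIndex.monomial_mul]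
  exact sum_mem fun σ _ => subset_span (Set.mem_insert_of_mem _ (Set.mem_range_self _))

def msSubalgebra (d n : ℕ) : Subalgebra ℝ (LipMap d n → ℝ) :=
  (Submodule.span ℝ (insert 1 (Set.range LevelIndex.monomial))).toSubalgebra
    (Submodule.subset_span (Set.mem_insert _ _)) fun _ _ => mul_mem_span_monomials

lemma mem_msSubalgebra_iff {d n : ℕ} {F : LipMap d n → ℝ} :
    F ∈ msSubalgebra d n ↔ ∃ (r : ℕ) (c₀ : ℝ) (c : Fin r → ℝ) (I : Fin r → LevelIndex d n),
      ∀ x, F x = c₀ + ∑ i, c i * (I i).monomial x := by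
  rw [msSubalgebra, Submodule.mem_toSubalgebra, Submodule.mem_span_insert]
  simp only [Submodule.mem_span_set']
  constructor
  · rintro ⟨c₀, _, ⟨r, c, g, rfl⟩, rfl⟩
    choose I hI using fun i => (g i).2
    exact ⟨r, c₀, c, I, fun x => by simp [hI]⟩
  · rintro ⟨r, c₀, c, I, hF⟩
    refine ⟨c₀, _, ⟨r, c, fun i => ⟨_, I i, rfl⟩, rfl⟩, funext fun x => ?_⟩
    simp [hF]

theorem stmt18_general (d n : ℕ)
    (r₁ r₂ : ℕ) (a₀ b₀ : ℝ) (a : Fin r₁ → ℝ) (b : Fin r₂ → ℝ)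
    (m₁ : Fin r₁ → ℕ) (m₂ : Fin r₂ → ℕ)
    (hm₁ : ∀ i, 1 ≤ m₁ i) (hm₂ : ∀ i, 1 ≤ m₂ i)
    (P₁ : ∀ i, Fin (m₁ i) → Fin d → Fin n) (hP₁ : ∀ i k, StrictMono (P₁ i k))
    (π₁ : ∀ i, Fin d → Equiv.Perm (Fin (m₁ i)))
    (P₂ : ∀ i, Fin (m₂ i) → Fin d → Fin n) (hP₂ : ∀ i k, StrictMono (P₂ i k))
    (π₂ : ∀ i, Fin d → Equiv.Perm (Fin (m₂ i))) :
    ∃ (r' : ℕ) (c₀ : ℝ) (c : Fin r' → ℝ) (m' : Fin r' → ℕ)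
      (P' : ∀ i, Fin (m' i) → Fin d → Fin n)
      (π' : ∀ i, Fin d → Equiv.Perm (Fin (m' i))),
      (∀ i, 1 ≤ m' i) ∧ (∀ i k, StrictMono (P' i k)) ∧
      ∀ x : (Fin d → ℝ) → Fin n → ℝ, IsLipMap x →
        (a₀ + ∑ i, a i * msMonomial x (P₁ i) (π₁ i)) *
          (b₀ + ∑ i, b i * msMonomial x (P₂ i) (π₂ i)) =
        c₀ + ∑ i, c i * msMonomial x (P' i) (π' i) := by
  have hF : (fun x : LipMap d n => a₀ + ∑ i, a i * msMonomial x.1 (P₁ i) (π₁ i))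
      ∈ msSubalgebra d n :=
    mem_msSubalgebra_iff.2 ⟨r₁, a₀, a, fun i => ⟨m₁ i, P₁ i, π₁ i, hm₁ i, hP₁ i⟩, fun _ => rfl⟩
  have hG : (fun x : LipMap d n => b₀ + ∑ i, b i * msMonomial x.1 (P₂ i) (π₂ i))
      ∈ msSubalgebra d n :=
    mem_msSubalgebra_iff.2 ⟨r₂, b₀, b, fun i => ⟨m₂ i, P₂ i, π₂ i, hm₂ i, hP₂ i⟩, fun _ => rfl⟩
  obtain ⟨r', c₀, c, I, hFG⟩ := mem_msSubalgebra_iff.1 (mul_mem hF hG)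
  exact ⟨r', c₀, c, fun i => (I i).m, fun i => (I i).P, fun i => (I i).π,
    fun i => (I i).one_le_m, fun i => (I i).strictMono_P, fun x hx => hFG ⟨x, hx⟩⟩

/-- the linear span of the mapping space monomials (together with
constants) is closed under pointwise products: the product of two finite linear
combinations of monomials is again such a combination, as functions on the
Lipschitz maps. -/
theorem stmt18 (d n : ℕ) (hd : 1 ≤ d) (hn : d ≤ n)
    (r₁ r₂ : ℕ) (a₀ b₀ : ℝ) (a : Fin r₁ → ℝ) (b : Fin r₂ → ℝ)
    (m₁ : Fin r₁ → ℕ) (m₂ : Fin r₂ → ℕ)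
    (hm₁ : ∀ i, 1 ≤ m₁ i) (hm₂ : ∀ i, 1 ≤ m₂ i)
    (P₁ : ∀ i, Fin (m₁ i) → Fin d → Fin n) (hP₁ : ∀ i k, StrictMono (P₁ i k))
    (π₁ : ∀ i, Fin d → Equiv.Perm (Fin (m₁ i)))
    (P₂ : ∀ i, Fin (m₂ i) → Fin d → Fin n) (hP₂ : ∀ i k, StrictMono (P₂ i k))
    (π₂ : ∀ i, Fin d → Equiv.Perm (Fin (m₂ i))) :
    ∃ (r' : ℕ) (c₀ : ℝ) (c : Fin r' → ℝ) (m' : Fin r' → ℕ)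
      (P' : ∀ i, Fin (m' i) → Fin d → Fin n)
      (π' : ∀ i, Fin d → Equiv.Perm (Fin (m' i))),
      (∀ i, 1 ≤ m' i) ∧ (∀ i k, StrictMono (P' i k)) ∧
      ∀ x : (Fin d → ℝ) → Fin n → ℝ, IsLipMap x →
        (a₀ + ∑ i, a i * msMonomial x (P₁ i) (π₁ i)) *
          (b₀ + ∑ i, b i * msMonomial x (P₂ i) (π₂ i)) =
        c₀ + ∑ i, c i * msMonomial x (P' i) (π' i) :=
  stmt18_general d n r₁ r₂ a₀ b₀ a b m₁ m₂ hm₁ hm₂ P₁ hP₁ π₁ P₂ hP₂ π₂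

end
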